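/- The function y ↦ ln(F(exp(y))) is convex on the interval (−∞, 0), where F(x) = 1 − H((1−x)/2). In other words, F composed with the exponential map is log-convex on the negative reals. -/

import Mathlib

/-- The binary entropy function `H(x) = -x log₂ x - (1-x) log₂ (1-x)`
(with the convention `0 · log₂ 0 = 0`, automatic since `Real.logb 2 0 = 0`). -/
noncomputable def binH (x : ℝ) : ℝ :=
  -x * Real.logb 2 x - (1 - x) * Real.logb 2 (1 - x)

/-- `F(x) = 1 - H((1-x)/2)`. -/
noncomputable def entF (x : ℝ) : ℝ := 1 - binH ((1 - x) / 2)

open Real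

noncomputable def entL (x : ℝ) : ℝ :=
  Real.log 2 + (1 - x)/2 * Real.log ((1 - x)/2) + (1 + x)/2 * Real.log ((1 + x)/2)
noncomputable def entA (x : ℝ) : ℝ := (Real.log (1 + x) - Real.log (1 - x)) / 2
noncomputable def entW (x : ℝ) : ℝ := (entA x + x / (1 - x^2)) * entL x - x * (entA x)^2

lemma hasDerivAt_entL {x : ℝ} (h1 : -1 < x) (h2 : x < 1) : HasDerivAt entL (entA x) x := by
  have hp : (0:ℝ) < (1 - x)/2 := by linarith
  have hq : (0:ℝ) < (1 + x)/2 := by linarith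
  have dp : HasDerivAt (fun x : ℝ => (1 - x)/2) (-(1/2)) x := by
    exact (((hasDerivAt_id x).const_sub 1).div_const 2).congr_deriv (by norm_num)
  have dq : HasDerivAt (fun x : ℝ => (1 + x)/2) (1/2) x := by
    simpa using ((hasDerivAt_id x).const_add 1).div_const 2
  have dlp : HasDerivAt (fun x : ℝ => Real.log ((1 - x)/2)) ((1/((1-x)/2)) * (-(1/2))) x :=
    by have h := (Real.hasDerivAt_log hp.ne').comp x dp; exact h.congr_deriv (by ring)
  have dlq : HasDerivAt (fun x : ℝ => Real.log ((1 + x)/2)) ((1/((1+x)/2)) * (1/2)) x :=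
    by have h := (Real.hasDerivAt_log hq.ne').comp x dq; exact h.congr_deriv (by ring)
  have d1 : HasDerivAt (fun x : ℝ => (1 - x)/2 * Real.log ((1 - x)/2))
      ((-(1/2)) * Real.log ((1-x)/2) + ((1-x)/2) * ((1/((1-x)/2)) * (-(1/2)))) x := dp.mul dlp
  have d2 : HasDerivAt (fun x : ℝ => (1 + x)/2 * Real.log ((1 + x)/2))
      ((1/2) * Real.log ((1+x)/2) + ((1+x)/2) * ((1/((1+x)/2)) * (1/2))) x := dq.mul dlq
  have := ((d1.const_add (Real.log 2)).add d2)
  refine this.congr_deriv ?_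
  have e1 : Real.log ((1-x)/2) = Real.log (1-x) - Real.log 2 :=
    Real.log_div (by linarith) two_ne_zero
  have e2 : Real.log ((1+x)/2) = Real.log (1+x) - Real.log 2 :=
    Real.log_div (by linarith) two_ne_zero
  rw [entA, e1, e2]
  have hA : (1 - x) ≠ 0 := by linarith
  have hB : (1 + x) ≠ 0 := by linarith
  field_simp
  ring

lemma hasDerivAt_entA {x : ℝ} (h1 : -1 < x) (h2 : x < 1) :
    HasDerivAt entA (1/(1-x^2)) x := by
  have hA : (1 + x) ≠ 0 := by linarith
  have hB : (1 - x) ≠ 0 := by linarith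
  have d1 : HasDerivAt (fun x : ℝ => Real.log (1 + x)) (1/(1+x)) x := by
    have := (Real.hasDerivAt_log hA).comp x ((hasDerivAt_id x).const_add 1)
    exact this.congr_deriv (by ring)
  have d2 : HasDerivAt (fun x : ℝ => Real.log (1 - x)) (-(1/(1-x))) x := by
    have := (Real.hasDerivAt_log hB).comp x ((hasDerivAt_id x).const_sub 1)
    exact this.congr_deriv (by ring)
  have := (d1.sub d2).div_const 2
  refine this.congr_deriv ?_
  have h2' : (1 - x^2) ≠ 0 := by
    have : (1 - x^2) = (1-x)*(1+x) := by ring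
    rw [this]; exact mul_ne_zero hB hA
  field_simp
  ring

lemma entA_zero : entA 0 = 0 := by simp [entA]
lemma entL_zero : entL 0 = 0 := by
  simp only [entL]
  rw [show ((1:ℝ) - 0)/2 = 1/2 by norm_num, show ((1:ℝ) + 0)/2 = 1/2 by norm_num]
  rw [show Real.log (1/2 : ℝ) = -Real.log 2 by rw [one_div, Real.log_inv]]
  ring

-- x ≤ entA x on [0,1)
lemma le_entA {x : ℝ} (h0 : 0 ≤ x) (h2 : x < 1) : x ≤ entA x := by
  have mono : MonotoneOn (fun x => entA x - x) (Set.Ico (0:ℝ) 1) := by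
    apply monotoneOn_of_hasDerivWithinAt_nonneg (convex_Ico 0 1)
      (f' := fun x => 1/(1-x^2) - 1)
    · intro y hy
      exact (((hasDerivAt_entA (by linarith [hy.1]) hy.2).sub
        (hasDerivAt_id y)).continuousAt.continuousWithinAt)
    · rw [interior_Ico]
      intro y hy
      exact (((hasDerivAt_entA (by linarith [hy.1]) hy.2).sub
        (hasDerivAt_id y)).hasDerivWithinAt)
    · rw [interior_Ico]
      intro y hy
      have hy2 : y^2 < 1 := by nlinarith [hy.1, hy.2]
      have : (0:ℝ) < 1 - y^2 := by linarith
      have h1 : 1 ≤ 1/(1-y^2) := by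
        rw [le_div_iff₀ this]; nlinarith [sq_nonneg y, hy.1]
      linarith
  have := mono (Set.mem_Ico.2 ⟨le_refl 0, by norm_num⟩) (Set.mem_Ico.2 ⟨h0, h2⟩) h0
  simpa [entA_zero] using this

lemma entA_nonneg {x : ℝ} (h0 : 0 ≤ x) (h2 : x < 1) : 0 ≤ entA x :=
  le_trans h0 (le_entA h0 h2)

-- (1-x^2) * entA x ≤ x on [0,1)
lemma entA_le {x : ℝ} (h0 : 0 ≤ x) (h2 : x < 1) : (1 - x^2) * entA x ≤ x := by
  have mono : MonotoneOn (fun x => x/(1-x^2) - entA x) (Set.Ico (0:ℝ) 1) := by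
    apply monotoneOn_of_hasDerivWithinAt_nonneg (convex_Ico 0 1)
      (f' := fun x => 2*x^2/(1-x^2)^2)
    · intro y hy
      have hy2 : (0:ℝ) < 1 - y^2 := by nlinarith [hy.1, hy.2]
      have dq : HasDerivAt (fun x : ℝ => x/(1-x^2)) ((1*(1-y^2) - y*(-(2*y)))/(1-y^2)^2) y := by
        have dden : HasDerivAt (fun x : ℝ => 1 - x^2) (-(2*y)) y := by
          simpa using ((hasDerivAt_pow 2 y).const_sub 1)
        exact (hasDerivAt_id y).div dden hy2.ne'
      exact ((dq.sub (hasDerivAt_entA (by linarith [hy.1]) hy.2)).continuousAt.continuousWithinAt)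
    · rw [interior_Ico]
      intro y hy
      have hy2 : (0:ℝ) < 1 - y^2 := by nlinarith [hy.1, hy.2]
      have dden : HasDerivAt (fun x : ℝ => 1 - x^2) (-(2*y)) y := by
        simpa using ((hasDerivAt_pow 2 y).const_sub 1)
      have dq : HasDerivAt (fun x : ℝ => x/(1-x^2)) ((1*(1-y^2) - y*(-(2*y)))/(1-y^2)^2) y :=
        (hasDerivAt_id y).div dden hy2.ne'
      have := dq.sub (hasDerivAt_entA (by linarith [hy.1]) hy.2)
      refine (this.congr_deriv ?_).hasDerivWithinAt
      field_simp
      ring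
    · rw [interior_Ico]
      intro y hy
      positivity
  have h02 : (0:ℝ) ∈ Set.Ico (0:ℝ) 1 := Set.mem_Ico.2 ⟨le_refl 0, by norm_num⟩
  have := mono h02 (Set.mem_Ico.2 ⟨h0, h2⟩) h0
  simp only [entA_zero] at this
  norm_num at this
  have hy2 : (0:ℝ) < 1 - x^2 := by nlinarith
  calc (1 - x^2) * entA x ≤ (1 - x^2) * (x/(1-x^2)) :=
        mul_le_mul_of_nonneg_left this hy2.le
    _ = x := by field_simp

-- x^2/2 ≤ entL x on [0,1)
lemma le_entL {x : ℝ} (h0 : 0 ≤ x) (h2 : x < 1) : x^2/2 ≤ entL x := by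
  have mono : MonotoneOn (fun x => entL x - x^2/2) (Set.Ico (0:ℝ) 1) := by
    apply monotoneOn_of_hasDerivWithinAt_nonneg (convex_Ico 0 1)
      (f' := fun x => entA x - x)
    · intro y hy
      exact (((hasDerivAt_entL (by linarith [hy.1]) hy.2).sub
        ((hasDerivAt_pow 2 y).div_const 2)).continuousAt.continuousWithinAt)
    · rw [interior_Ico]
      intro y hy
      have := (hasDerivAt_entL (by linarith [hy.1]) hy.2).sub
        ((hasDerivAt_pow 2 y).div_const 2)
      refine (this.congr_deriv ?_).hasDerivWithinAt
      simp
    · rw [interior_Ico]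
      intro y hy
      simp only [sub_nonneg]
      exact le_entA hy.1.le hy.2
  have h02 : (0:ℝ) ∈ Set.Ico (0:ℝ) 1 := Set.mem_Ico.2 ⟨le_refl 0, by norm_num⟩
  have := mono h02 (Set.mem_Ico.2 ⟨h0, h2⟩) h0
  simp only [entL_zero] at this
  norm_num at this
  linarith

lemma hasDerivAt_entW {y : ℝ} (h1 : -1 < y) (h2 : y < 1) :
    HasDerivAt entW (2*entL y/(1-y^2)^2 - y*entA y/(1-y^2)) y := by
  have hy2 : (0:ℝ) < 1 - y^2 := by nlinarith
  have dden : HasDerivAt (fun x : ℝ => 1 - x^2) (-(2*y)) y := by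
    simpa using ((hasDerivAt_pow 2 y).const_sub 1)
  have dB : HasDerivAt (fun x : ℝ => x/(1-x^2)) ((1*(1-y^2) - y*(-(2*y)))/(1-y^2)^2) y :=
    (hasDerivAt_id y).div dden hy2.ne'
  have dA := hasDerivAt_entA h1 h2
  have dL := hasDerivAt_entL h1 h2
  have dA2 : HasDerivAt (fun x => (entA x)^2) (2*entA y * (1/(1-y^2))) y := by
    exact (dA.pow 2).congr_deriv (by simp)
  have dxA2 : HasDerivAt (fun x : ℝ => x * (entA x)^2)
      (1*(entA y)^2 + y*(2*entA y*(1/(1-y^2)))) y := (hasDerivAt_id y).mul dA2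
  have dW := ((dA.add dB).mul dL).sub dxA2
  refine dW.congr_deriv ?_
  simp only [Pi.add_apply]
  field_simp
  ring

lemma entW_nonneg {x : ℝ} (h0 : 0 ≤ x) (h2 : x < 1) : 0 ≤ entW x := by
  have mono : MonotoneOn entW (Set.Ico (0:ℝ) 1) := by
    apply monotoneOn_of_hasDerivWithinAt_nonneg (convex_Ico 0 1)
      (f' := fun x => 2*entL x/(1-x^2)^2 - x*entA x/(1-x^2))
    · intro y hy
      exact (hasDerivAt_entW (by linarith [hy.1]) hy.2).continuousAt.continuousWithinAt
    · rw [interior_Ico]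
      intro y hy
      exact (hasDerivAt_entW (by linarith [hy.1]) hy.2).hasDerivWithinAt
    · rw [interior_Ico]
      intro y hy
      have hy2 : (0:ℝ) < 1 - y^2 := by nlinarith [hy.1, hy.2]
      have key : y * (entA y * (1-y^2)) ≤ 2 * entL y := by
        have h1 := entA_le hy.1.le hy.2
        have h2 := le_entL hy.1.le hy.2
        have h3 := entA_nonneg hy.1.le hy.2
        nlinarith [hy.1]
      rw [sub_nonneg]
      have e : y*entA y/(1-y^2) = y*(entA y*(1-y^2))/(1-y^2)^2 := by
        field_simp
      rw [e]
      gcongr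
  have h02 : (0:ℝ) ∈ Set.Ico (0:ℝ) 1 := Set.mem_Ico.2 ⟨le_refl 0, by norm_num⟩
  have := mono h02 (Set.mem_Ico.2 ⟨h0, h2⟩) h0
  have hW0 : entW 0 = 0 := by simp [entW, entA_zero, entL_zero]
  linarith [hW0 ▸ this]

lemma entL_pos {x : ℝ} (h0 : 0 < x) (h2 : x < 1) : 0 < entL x :=
  lt_of_lt_of_le (by positivity) (le_entL h0.le h2)

lemma entF_eq (x : ℝ) : entF x = entL x / Real.log 2 := by
  have hlog : Real.log 2 ≠ 0 := (Real.log_pos (by norm_num)).ne'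
  have h : (1:ℝ) - (1-x)/2 = (1+x)/2 := by ring
  rw [entF, binH, h, entL, Real.logb, Real.logb]
  field_simp
  ring

/-- `y ↦ ln (F(exp y))` is convex on the negative reals, i.e. `F ∘ exp` is log-convex there. -/
theorem convexOn_log_entF_exp :
    ConvexOn ℝ (Set.Iio (0 : ℝ)) (fun y : ℝ => Real.log (entF (Real.exp y))) := by
  have hlog2 : (0:ℝ) < Real.log 2 := Real.log_pos (by norm_num)
  have hx : ∀ y : ℝ, y < 0 → 0 < Real.exp y ∧ Real.exp y < 1 := fun y hy =>
    ⟨Real.exp_pos y, by simpa using Real.exp_lt_exp.2 hy⟩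
  have hg : ConvexOn ℝ (Set.Iio (0:ℝ)) (fun y => Real.log (entL (Real.exp y))) := by
    apply convexOn_of_hasDerivWithinAt2_nonneg (convex_Iio 0)
      (f' := fun y => Real.exp y * entA (Real.exp y) / entL (Real.exp y))
      (f'' := fun y => Real.exp y * entW (Real.exp y) / (entL (Real.exp y))^2)
    · -- continuity
      intro y hy
      obtain ⟨h0, h1⟩ := hx y hy
      have hL := entL_pos h0 h1
      have dLe : HasDerivAt (fun y => entL (Real.exp y)) (entA (Real.exp y) * Real.exp y) y :=
        (hasDerivAt_entL (by linarith) h1).comp y (Real.hasDerivAt_exp y)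
      exact (((Real.hasDerivAt_log hL.ne').comp y dLe).continuousAt.continuousWithinAt)
    · rw [interior_Iio]
      intro y hy
      obtain ⟨h0, h1⟩ := hx y hy
      have hL := entL_pos h0 h1
      have dLe : HasDerivAt (fun y => entL (Real.exp y)) (entA (Real.exp y) * Real.exp y) y :=
        (hasDerivAt_entL (by linarith) h1).comp y (Real.hasDerivAt_exp y)
      have dg := (Real.hasDerivAt_log hL.ne').comp y dLe
      refine (dg.congr_deriv ?_).hasDerivWithinAt
      field_simp
    · rw [interior_Iio]
      intro y hy
      obtain ⟨h0, h1⟩ := hx y hy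
      have hL := entL_pos h0 h1
      have hy2 : (0:ℝ) < 1 - (Real.exp y)^2 := by nlinarith
      have dLe : HasDerivAt (fun y => entL (Real.exp y)) (entA (Real.exp y) * Real.exp y) y :=
        (hasDerivAt_entL (by linarith) h1).comp y (Real.hasDerivAt_exp y)
      have dAe : HasDerivAt (fun y => entA (Real.exp y)) ((1/(1-(Real.exp y)^2)) * Real.exp y) y :=
        (hasDerivAt_entA (by linarith) h1).comp y (Real.hasDerivAt_exp y)
      have dN : HasDerivAt (fun y => Real.exp y * entA (Real.exp y))
          (Real.exp y * entA (Real.exp y) +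
            Real.exp y * ((1/(1-(Real.exp y)^2)) * Real.exp y)) y :=
        (Real.hasDerivAt_exp y).mul dAe
      have dq := dN.div dLe hL.ne'
      refine (dq.congr_deriv ?_).hasDerivWithinAt
      rw [entW]
      field_simp
    · rw [interior_Iio]
      intro y hy
      obtain ⟨h0, h1⟩ := hx y hy
      have hL := entL_pos h0 h1
      have hW := entW_nonneg h0.le h1
      positivity
  have heq : Set.EqOn (fun y => Real.log (entL (Real.exp y)) - Real.log (Real.log 2))
      (fun y : ℝ => Real.log (entF (Real.exp y))) (Set.Iio 0) := by
    intro y hy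
    obtain ⟨h0, h1⟩ := hx y hy
    simp only [entF_eq]
    rw [Real.log_div (entL_pos h0 h1).ne' hlog2.ne']
  exact (hg.sub (concaveOn_const _ (convex_Iio 0))).congr heq
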